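/- arXiv:math/0009115 — 3 statements merged into one kernel-verified Lean document; each statement's English description precedes it below -/
import Mathlib

section
/- Let R be the commutative ring Z[y,z]/(y², 2z - y). Then the subgroup of R generated by the images of y², yz, z² (the degree-2 part, where y and z have degree 1) is a cyclic group of order 4 generated by the image of z². -/
open MvPolynomial

/-- The ring `ℤ[y,z]/(y², 2z - y)`. -/
noncomputable abbrev Stmt0.R : Type :=
  MvPolynomial (Fin 2) ℤ ⧸
    Ideal.span ({(X 0 : MvPolynomial (Fin 2) ℤ) ^ 2, 2 * X 1 - X 0} :
      Set (MvPolynomial (Fin 2) ℤ))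

/-!
In `R` we have `y = 2z` and `y² = 0`, so `yz = 2z²` and `4z² = y² = 0`: the degree-2 part is
generated by `z²`, whose order divides 4. The evaluation `y ↦ 2, z ↦ 1` kills both relations and
so induces `R → ℤ/4`, which sends `z²` to `1`; hence the order is exactly 4.
-/

theorem AddSubgroup.closure_eq_zmultiples_of_subset {G : Type*} [AddGroup G] {s : Set G} {a : G}
    (hs : s ⊆ AddSubgroup.zmultiples a) (ha : a ∈ s) :
    AddSubgroup.closure s = AddSubgroup.zmultiples a :=
  le_antisymm ((AddSubgroup.closure_le _).2 hs)
    (AddSubgroup.zmultiples_le_of_mem (AddSubgroup.subset_closure ha))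

theorem addOrderOf_eq_of_nsmul_eq_zero_of_map {G H : Type*} [AddMonoid G] [AddMonoid H]
    (f : G →+ H) {a : G} {n : ℕ} (ha : n • a = 0) (hfa : addOrderOf (f a) = n) :
    addOrderOf a = n :=
  Nat.dvd_antisymm (addOrderOf_dvd_of_nsmul_eq_zero ha) (hfa ▸ addOrderOf_map_dvd f a)

theorem four_nsmul_sq_eq_zero_of_two_mul_eq {S : Type*} [CommSemiring S] {y z : S}
    (hy : y ^ 2 = 0) (hz : 2 * z = y) : 4 • z ^ 2 = 0 := by
  rw [← hy, ← hz, nsmul_eq_mul]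
  ring

namespace Stmt0

theorem mk_X_zero_sq : (Ideal.Quotient.mk _ (X 0 ^ 2) : R) = 0 :=
  Ideal.Quotient.eq_zero_iff_mem.2 (Ideal.subset_span (Set.mem_insert _ _))

theorem two_mul_mk_X_one : 2 * (Ideal.Quotient.mk _ (X 1) : R) = Ideal.Quotient.mk _ (X 0) := by
  rw [← map_ofNat (Ideal.Quotient.mk _) 2, ← map_mul, Ideal.Quotient.eq]
  exact Ideal.subset_span (Set.mem_insert_of_mem _ rfl)

noncomputable def toZModFour : R →+* ZMod 4 :=
  Ideal.Quotient.lift _ (aeval ![2, 1] : MvPolynomial (Fin 2) ℤ →ₐ[ℤ] ZMod 4).toRingHom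
    fun _ ha => (RingHom.mem_ker).1 <| (Ideal.span_le.2 <| by
      rintro p (rfl | rfl) <;> simp [RingHom.mem_ker]; decide) ha

theorem toZModFour_mk_X_one_sq : toZModFour (Ideal.Quotient.mk _ (X 1 ^ 2)) = 1 := by
  simp [toZModFour]

end Stmt0

/-- In `R = ℤ[y,z]/(y², 2z - y)`, the subgroup generated by the images of
`y²`, `y·z`, `z²` (the degree-2 part) is cyclic of order 4, generated by the
image of `z²`. -/
theorem stmt_0
    (π : MvPolynomial (Fin 2) ℤ →+* Stmt0.R)
    (hπ : π = Ideal.Quotient.mk _) :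
    AddSubgroup.closure
        ({π ((X 0) ^ 2), π ((X 0) * (X 1)), π ((X 1) ^ 2)} : Set Stmt0.R) =
      AddSubgroup.zmultiples (π ((X 1) ^ 2)) ∧
    addOrderOf (π ((X 1) ^ 2)) = 4 := by
  have hy : π (X 0 ^ 2) = 0 := hπ ▸ Stmt0.mk_X_zero_sq
  have hz : 2 * π (X 1) = π (X 0) := hπ ▸ Stmt0.two_mul_mk_X_one
  have hyz : π (X 0 * X 1) = (2 : ℤ) • π (X 1 ^ 2) := by
    rw [map_mul, ← hz, map_pow, zsmul_eq_mul]
    push_cast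
    ring
  have hz4 : 4 • π (X 1 ^ 2) = 0 := by
    rw [map_pow]
    exact four_nsmul_sq_eq_zero_of_two_mul_eq (by rw [← map_pow, hy]) hz
  refine ⟨AddSubgroup.closure_eq_zmultiples_of_subset ?_ (by simp), ?_⟩
  · rintro x (rfl | rfl | rfl)
    · rw [hy]
      exact zero_mem _
    · rw [hyz]
      exact AddSubgroup.zsmul_mem _ (AddSubgroup.mem_zmultiples _) 2
    · exact AddSubgroup.mem_zmultiples _
  · refine addOrderOf_eq_of_nsmul_eq_zero_of_map Stmt0.toZModFour.toAddMonoidHom hz4 ?_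
    rw [RingHom.toAddMonoidHom_eq_coe, AddMonoidHom.coe_coe, hπ, Stmt0.toZModFour_mk_X_one_sq,
      ZMod.addOrderOf_one]
end

section
/- Let A be a commutative ring and m ∈ A. Define φ : ⊕_{s≥1} A → ⊕_{s≥0} A by φ(a₁, a₂, ...) = (m·a₁, m·a₂ - n·a₁, m·a₃ - n·a₂, ...). Then the cokernel of φ is isomorphic as an A-module to A[z]/(n·z - m) via (b₀, b₁, b₂, ...) ↦ Σ b_s·z^s. -/
/-!
Reading a finitely supported sequence `(b_s)` as the polynomial `Σ b_s z^s` identifies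
`⊕_{s≥0} A` with `A[z]`, and under this identification `φ` becomes multiplication by
`m - n z`. Hence the range of `φ` is the ideal `(n z - m)`, which is exactly the kernel of
the projection onto `A[z]/(n z - m)`.
-/

open Polynomial

namespace Polynomial

variable {A : Type*} [CommRing A]

theorem linearCombination_mk_X_pow (I : Ideal A[X]) (b : ℕ →₀ A) :
    Finsupp.linearCombination A (fun s => Ideal.Quotient.mk I (X ^ s)) b =
      Ideal.Quotient.mk I ((basisMonomials A).repr.symm b) := by
  rw [Module.Basis.repr_symm_apply, coe_basisMonomials]
  simp only [← X_pow_eq_monomial]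
  exact (Finsupp.apply_linearCombination A (Ideal.Quotient.mkₐ A I).toLinearMap _ b).symm

theorem coeff_basisMonomials_repr_symm (b : ℕ →₀ A) (s : ℕ) :
    ((basisMonomials A).repr.symm b).coeff s = b s := rfl

theorem coeff_C_sub_C_mul_X_mul (m a : A) (p : A[X]) (s : ℕ) :
    ((C m - C a * X) * p).coeff s = m * p.coeff s - a * (if s = 0 then 0 else p.coeff (s - 1)) := by
  rw [sub_mul, coeff_sub, coeff_C_mul, mul_assoc, coeff_C_mul]
  rcases s with _ | s
  · simp
  · simp [coeff_X_mul]

end Polynomial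

theorem stmt_12_general (A : Type*) [CommRing A] (m : A) (n : ℕ)
    (φ : (ℕ →₀ A) →ₗ[A] (ℕ →₀ A))
    (hφ : ∀ (f : ℕ →₀ A) (s : ℕ),
      φ f s = m * f s - n * (if h : s = 0 then 0 else f (s - 1)))
    (T : (ℕ →₀ A) →ₗ[A] (A[X] ⧸ Ideal.span ({(n : A[X]) * X - C m} : Set A[X])))
    (hT : T = Finsupp.linearCombination A (fun s => Ideal.Quotient.mk _ (X ^ s))) :
    Function.Surjective T ∧ LinearMap.ker T = LinearMap.range φ := by
  set e := (basisMonomials A).repr.symm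
  have hTe : ∀ b, T b = Ideal.Quotient.mk _ (e b) := fun b => by
    rw [hT, linearCombination_mk_X_pow]
  have he_φ : ∀ f, e (φ f) = -(((n : A[X]) * X - C m) * e f) := fun f => by
    ext s
    rw [← neg_mul, neg_sub, ← map_natCast C, coeff_C_sub_C_mul_X_mul]
    simp only [e, coeff_basisMonomials_repr_symm, hφ, dite_eq_ite]
  refine ⟨fun y => ?_, Submodule.ext fun b => ?_⟩
  · obtain ⟨p, rfl⟩ := Ideal.Quotient.mk_surjective y
    exact ⟨e.symm p, by rw [hTe, e.apply_symm_apply]⟩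
  rw [LinearMap.mem_ker, LinearMap.mem_range, hTe, Ideal.Quotient.eq_zero_iff_mem,
    Ideal.mem_span_singleton']
  constructor
  · rintro ⟨q, hq⟩
    refine ⟨e.symm (-q), e.injective ?_⟩
    rw [he_φ, e.apply_symm_apply, ← hq]
    ring
  · rintro ⟨f, rfl⟩
    exact ⟨-e f, by rw [he_φ]; ring⟩

/-- Let `A` be a commutative ring, `m ∈ A`, `n ≥ 1`.  Define
`φ : ⊕_{s≥1} A → ⊕_{s≥0} A` by `φ(a₁, a₂, …) = (m·a₁, m·a₂ - n·a₁, …)`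
(here both sides are indexed by `ℕ`, with the domain entry `a_{s+1}` stored at
index `s`).  Then the cokernel of `φ` is isomorphic as an `A`-module to
`A[z]/(n·z - m)` via `(b₀, b₁, …) ↦ Σ b_s·z^s`: i.e. the total map
`⊕_{s≥0} A → A[z]/(n·z - m)` is surjective with kernel equal to the range
of `φ`. -/
theorem stmt_12 (A : Type*) [CommRing A] (m : A) (n : ℕ) (hn : 0 < n)
    (φ : (ℕ →₀ A) →ₗ[A] (ℕ →₀ A))
    (hφ : ∀ (f : ℕ →₀ A) (s : ℕ),
      φ f s = m * f s - n * (if h : s = 0 then 0 else f (s - 1)))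
    (T : (ℕ →₀ A) →ₗ[A] (A[X] ⧸ Ideal.span ({(n : A[X]) * X - C m} : Set A[X])))
    (hT : T = Finsupp.linearCombination A (fun s => Ideal.Quotient.mk _ (X ^ s))) :
    Function.Surjective T ∧ LinearMap.ker T = LinearMap.range φ :=
  stmt_12_general A m n φ hφ T hT
end

section
/- Let F ⊆ F' be a field extension of odd degree and Q a quaternion division algebra over F. Then Q ⊗_F F' is still a division algebra. In particular, a smooth conic over F without F-points has no points over any odd-degree extension of F. -/
/-!
`(a,b)_K` is a division algebra as soon as the conic `x² - a y² - b z² = 0` has no nontrivial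
`K`-point, because a zero of the norm form `x² - a y² - b z² + a b w²` produces one; conversely a
pure quaternion `x + y i + z j` of norm zero is a zero divisor. So it suffices to show that
anisotropy of the conic survives odd-degree extensions.

By induction on the degree, tower through a simple subextension `K(w) ≅ K[X]/(m)` with `m`
irreducible of odd degree `n`. A point over `K[X]/(m)` lifts to a primitive triple `(f, g, h)` of
polynomials of degree `< n` with `m ∣ f² - a g² - b h²`. Anisotropy over `K` forces the leading
coefficients not to cancel, so this form has degree `2 max(deg f, deg g, deg h) < 2n`, and the
cofactor has odd degree `< n`. An irreducible factor `q` of odd degree then gives a point over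
`K[X]/(q)`, which by induction must be trivial, i.e. `q` divides `f`, `g` and `h`: impossible.
-/

open Quaternion Polynomial IntermediateField Module

universe u

def ConicAnisotropic {R : Type*} [CommRing R] (a b : R) : Prop :=
  ∀ x y z : R, x ^ 2 - a * y ^ 2 - b * z ^ 2 = 0 → x = 0 ∧ y = 0 ∧ z = 0

theorem ConicAnisotropic.map_algEquiv {K A B : Type*} [CommRing K] [CommRing A] [CommRing B]
    [Algebra K A] [Algebra K B] (e : A ≃ₐ[K] B) {a b : K}
    (hab : ConicAnisotropic (algebraMap K A a) (algebraMap K A b)) :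
    ConicAnisotropic (algebraMap K B a) (algebraMap K B b) := by
  intro x y z hxyz
  have := hab (e.symm x) (e.symm y) (e.symm z) (e.injective (by simpa using hxyz))
  simpa using this

theorem QuaternionAlgebra.re_self_mul_star {R : Type*} [CommRing R] {c₁ c₂ : R}
    (q : ℍ[R, c₁, c₂]) :
    (q * star q).re = q.re ^ 2 - c₁ * q.imI ^ 2 - c₂ * q.imJ ^ 2 + c₁ * c₂ * q.imK ^ 2 := by
  simp only [QuaternionAlgebra.re_mul, QuaternionAlgebra.re_star, QuaternionAlgebra.imI_star,
    QuaternionAlgebra.imJ_star, QuaternionAlgebra.imK_star]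
  ring

theorem conicAnisotropic_of_forall_isUnit {R : Type*} [CommRing R] {a b : R}
    (hdiv : ∀ q : ℍ[R, a, b], q ≠ 0 → IsUnit q) : ConicAnisotropic a b := by
  intro x y z hxyz
  let q : ℍ[R, a, b] := ⟨x, y, z, 0⟩
  have hnorm : q * star q = 0 := by
    rw [QuaternionAlgebra.mul_star_eq_coe, QuaternionAlgebra.re_self_mul_star]
    simp [q, hxyz]
  by_cases hq : q = 0
  · simp_all [q, QuaternionAlgebra.ext_iff]
  · exact absurd (by rw [← star_star q, (hdiv q hq).mul_right_eq_zero.mp hnorm, star_zero]) hq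

namespace ConicAnisotropic

variable {K : Type*} [Field K] {a b : K}

theorem eq_zero_of_normForm_eq_zero (hab : ConicAnisotropic a b) {x y z w : K}
    (h : x ^ 2 - a * y ^ 2 - b * z ^ 2 + a * b * w ^ 2 = 0) :
    x = 0 ∧ y = 0 ∧ z = 0 ∧ w = 0 := by
  by_cases hzw : z ^ 2 - a * w ^ 2 = 0
  · obtain ⟨rfl, rfl, -⟩ := hab z w 0 (by linear_combination hzw)
    obtain ⟨rfl, rfl, -⟩ := hab x y 0 (by linear_combination h)
    simp
  · -- the norm form is `N(x + y√a) - b N(z + w√a)`, and `N` is multiplicative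
    refine absurd (hab (x * z + a * y * w) (x * w + y * z) (z ^ 2 - a * w ^ 2) ?_).2.2 hzw
    linear_combination (z ^ 2 - a * w ^ 2) * h

theorem isUnit_of_ne_zero (hab : ConicAnisotropic a b) {q : ℍ[K, a, b]} (hq : q ≠ 0) :
    IsUnit q := by
  set N := (q * star q).re with hN_def
  have hqN : q * star q = N := q.mul_star_eq_coe
  have hN : N ≠ 0 := by
    rw [hN_def, QuaternionAlgebra.re_self_mul_star]
    intro h0
    obtain ⟨h1, h2, h3, h4⟩ := hab.eq_zero_of_normForm_eq_zero h0
    exact hq (QuaternionAlgebra.ext h1 h2 h3 h4)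
  have hright : q * (star q * (N⁻¹ : K)) = 1 := by
    rw [← mul_assoc, hqN, ← QuaternionAlgebra.coe_mul, mul_inv_cancel₀ hN,
      QuaternionAlgebra.coe_one]
  have hleft : star q * (N⁻¹ : K) * q = 1 := by
    rw [mul_assoc, QuaternionAlgebra.coe_commutes, ← mul_assoc, star_comm_self', hqN,
      ← QuaternionAlgebra.coe_mul, mul_inv_cancel₀ hN, QuaternionAlgebra.coe_one]
  exact ⟨⟨q, _, hright, hleft⟩, rfl⟩

theorem coeff_conicForm_ne_zero (hab : ConicAnisotropic a b) {f g h : K[X]}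
    (hne : ¬(f = 0 ∧ g = 0 ∧ h = 0)) :
    (f ^ 2 - C a * g ^ 2 - C b * h ^ 2).coeff (2 * max (max f.natDegree g.natDegree) h.natDegree)
      ≠ 0 := by
  set d := max (max f.natDegree g.natDegree) h.natDegree
  have hfd : f.natDegree ≤ d := by omega
  have hgd : g.natDegree ≤ d := by omega
  have hhd : h.natDegree ≤ d := by omega
  rw [coeff_sub, coeff_sub, coeff_C_mul, coeff_C_mul, coeff_pow_of_natDegree_le hfd,
    coeff_pow_of_natDegree_le hgd, coeff_pow_of_natDegree_le hhd]
  intro h0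
  obtain ⟨hf, hg, hh⟩ := hab _ _ _ h0
  have below : ∀ p : K[X], p.natDegree ≤ d → p.coeff d = 0 → p.natDegree < d ∨ d = 0 := by
    intro p hpd hp
    refine hpd.lt_or_eq.imp_right fun hpd => ?_
    rw [← hpd, ← leadingCoeff, leadingCoeff_eq_zero] at hp
    rw [← hpd, hp, natDegree_zero]
  have hd0 : d = 0 := by
    have := below f hfd hf; have := below g hgd hg; have := below h hhd hh; omega
  have const : ∀ p : K[X], p.natDegree ≤ d → p.coeff d = 0 → p = 0 := by
    intro p hpd hp
    rw [eq_C_of_natDegree_le_zero (p := p) (hd0 ▸ hpd), ← hd0, hp, C_0]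
  exact hne ⟨const f hfd hf, const g hgd hg, const h hhd hh⟩

theorem natDegree_conicForm (hab : ConicAnisotropic a b) {f g h : K[X]}
    (hne : ¬(f = 0 ∧ g = 0 ∧ h = 0)) :
    (f ^ 2 - C a * g ^ 2 - C b * h ^ 2).natDegree =
      2 * max (max f.natDegree g.natDegree) h.natDegree := by
  set d := max (max f.natDegree g.natDegree) h.natDegree
  refine le_antisymm ?_ (le_natDegree_of_ne_zero (hab.coeff_conicForm_ne_zero hne))
  have hsq : ∀ p : K[X], p.natDegree ≤ d → (p ^ 2).natDegree ≤ 2 * d :=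
    fun p hp => natDegree_pow_le_of_le 2 hp
  refine (natDegree_sub_le_of_le (n := 2 * d) (natDegree_sub_le_of_le (n := 2 * d)
    (hsq f (by omega)) ?_) ?_).trans (by simp)
  · exact (natDegree_C_mul_le _ _).trans (hsq g (by omega))
  · exact (natDegree_C_mul_le _ _).trans (hsq h (by omega))

end ConicAnisotropic

theorem Polynomial.exists_irreducible_odd_natDegree_dvd {K : Type*} [Field K] {p : K[X]}
    (hp : p ≠ 0) (hodd : Odd p.natDegree) :
    ∃ q : K[X], Irreducible q ∧ Odd q.natDegree ∧ q ∣ p := by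
  induction p using WfDvdMonoid.induction_on_irreducible with
  | zero => exact absurd rfl hp
  | unit u hu => simp [natDegree_eq_zero_of_isUnit hu] at hodd
  | mul p i hp0 hi ih =>
    rw [natDegree_mul hi.ne_zero hp0, Nat.odd_add'] at hodd
    by_cases hio : Odd i.natDegree
    · exact ⟨i, hi, hio, dvd_mul_right i p⟩
    · obtain ⟨q, hq, hqo, hqp⟩ := ih hp0 (hodd.mpr (Nat.not_odd_iff_even.mp hio))
      exact ⟨q, hq, hqo, hqp.mul_left i⟩

theorem extract_gcd_three {R : Type*} [CommMonoidWithZero R] [GCDMonoid R] {f g h : R}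
    (hne : ¬(f = 0 ∧ g = 0 ∧ h = 0)) :
    ∃ c f' g' h' : R, c ≠ 0 ∧ f = c * f' ∧ g = c * g' ∧ h = c * h' ∧
      ∀ d, d ∣ f' → d ∣ g' → d ∣ h' → IsUnit d := by
  set c := gcd f (gcd g h)
  have hc : c ≠ 0 := by simpa [c, gcd_eq_zero_iff] using hne
  obtain ⟨f', hf⟩ := gcd_dvd_left f (gcd g h)
  obtain ⟨g', hg⟩ := (gcd_dvd_right f (gcd g h)).trans (gcd_dvd_left g h)
  obtain ⟨h', hh⟩ := (gcd_dvd_right f (gcd g h)).trans (gcd_dvd_right g h)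
  refine ⟨c, f', g', h', hc, hf, hg, hh, fun d hdf hdg hdh => ?_⟩
  have hcd : c * d ∣ c * 1 := by
    rw [mul_one]
    refine dvd_gcd ?_ (dvd_gcd ?_ ?_)
    · rw [hf]; exact mul_dvd_mul_left c hdf
    · rw [hg]; exact mul_dvd_mul_left c hdg
    · rw [hh]; exact mul_dvd_mul_left c hdh
  exact isUnit_of_dvd_one ((mul_dvd_mul_iff_left hc).mp hcd)

theorem AdjoinRoot.exists_natDegree_lt_mk_eq {K : Type*} [Field K] {m : K[X]}
    (hm : m.natDegree ≠ 0) (x : AdjoinRoot m) :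
    ∃ f : K[X], f.natDegree < m.natDegree ∧ mk m f = x := by
  obtain ⟨f, rfl⟩ := mk_surjective x
  refine ⟨f % m, natDegree_mod_lt f hm, mk_eq_mk.mpr ⟨-(f / m), ?_⟩⟩
  rw [EuclideanDomain.mod_eq_sub_mul_div]
  ring

theorem AdjoinRoot.mk_conicForm {R : Type*} [CommRing R] (p f g h : R[X]) (a b : R) :
    mk p (f ^ 2 - C a * g ^ 2 - C b * h ^ 2) =
      mk p f ^ 2 - of p a * mk p g ^ 2 - of p b * mk p h ^ 2 := by
  simp only [map_sub, map_mul, map_pow, mk_C]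

theorem conicAnisotropic_adjoinRoot_iff {R : Type*} [CommRing R] (p : R[X]) (a b : R) :
    ConicAnisotropic (AdjoinRoot.of p a) (AdjoinRoot.of p b) ↔
      ∀ f g h : R[X], p ∣ f ^ 2 - C a * g ^ 2 - C b * h ^ 2 → p ∣ f ∧ p ∣ g ∧ p ∣ h := by
  simp only [ConicAnisotropic, AdjoinRoot.mk_surjective.forall, ← AdjoinRoot.mk_conicForm,
    AdjoinRoot.mk_eq_zero]

theorem exists_primitive_of_not_conicAnisotropic_adjoinRoot {K : Type*} [Field K] {a b : K}
    {m : K[X]} (hm : Irreducible m)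
    (hiso : ¬ConicAnisotropic (AdjoinRoot.of m a) (AdjoinRoot.of m b)) :
    ∃ f g h : K[X], max (max f.natDegree g.natDegree) h.natDegree < m.natDegree ∧
      (∀ d, d ∣ f → d ∣ g → d ∣ h → IsUnit d) ∧ m ∣ f ^ 2 - C a * g ^ 2 - C b * h ^ 2 := by
  classical
  simp only [ConicAnisotropic, not_forall] at hiso
  obtain ⟨x, y, z, hxyz, hne⟩ := hiso
  have hm0 : m.natDegree ≠ 0 := hm.natDegree_pos.ne'
  obtain ⟨f₁, hf₁, rfl⟩ := AdjoinRoot.exists_natDegree_lt_mk_eq hm0 x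
  obtain ⟨g₁, hg₁, rfl⟩ := AdjoinRoot.exists_natDegree_lt_mk_eq hm0 y
  obtain ⟨h₁, hh₁, rfl⟩ := AdjoinRoot.exists_natDegree_lt_mk_eq hm0 z
  rw [← AdjoinRoot.mk_conicForm, AdjoinRoot.mk_eq_zero] at hxyz
  simp only [AdjoinRoot.mk_eq_zero] at hne
  obtain ⟨c, f, g, h, hc, rfl, rfl, rfl, hcop⟩ :=
    extract_gcd_three (f := f₁) (g := g₁) (h := h₁) (by rintro ⟨rfl, rfl, rfl⟩; simp at hne)
  have hmc : ¬m ∣ c ^ 2 := fun hmc =>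
    have hmc := hm.prime.dvd_of_dvd_pow hmc
    hne ⟨hmc.mul_right f, hmc.mul_right g, hmc.mul_right h⟩
  have hdeg : ∀ p : K[X], (c * p).natDegree < m.natDegree → p.natDegree < m.natDegree :=
    fun p hp => (natDegree_le_natDegree (mul_comm p c ▸ degree_le_mul_left p hc)).trans_lt hp
  refine ⟨f, g, h, max_lt (max_lt (hdeg f hf₁) (hdeg g hg₁)) (hdeg h hh₁), hcop,
    (hm.prime.dvd_or_dvd ?_).resolve_left hmc⟩
  convert hxyz using 1
  ring

namespace ConicAnisotropic

theorem adjoinRoot {K : Type*} [Field K] {a b : K} (hab : ConicAnisotropic a b)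
    {m : K[X]} (hm : Irreducible m) (hodd : Odd m.natDegree) :
    ConicAnisotropic (AdjoinRoot.of m a) (AdjoinRoot.of m b) := by
  induction hn : m.natDegree using Nat.strong_induction_on generalizing m with
  | _ n ih =>
  by_contra hiso
  obtain ⟨f, g, h, hdeg, hcop, e, he⟩ :=
    exists_primitive_of_not_conicAnisotropic_adjoinRoot hm hiso
  have hne : ¬(f = 0 ∧ g = 0 ∧ h = 0) := by
    rintro ⟨rfl, rfl, rfl⟩
    exact not_isUnit_zero (hcop 0 dvd_rfl dvd_rfl dvd_rfl)
  have hS := hab.natDegree_conicForm hne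
  have he0 : e ≠ 0 := by
    rintro rfl
    exact hab.coeff_conicForm_ne_zero hne (by rw [he, mul_zero, coeff_zero])
  rw [he, natDegree_mul hm.ne_zero he0, hn] at hS
  have heodd : Odd e.natDegree := by
    rw [Nat.odd_iff] at hodd ⊢
    omega
  obtain ⟨q, hq, hqodd, hqe⟩ := exists_irreducible_odd_natDegree_dvd he0 heodd
  have hqn : q.natDegree < n := by
    have := natDegree_le_of_dvd hqe he0
    omega
  obtain ⟨hqf, hqg, hqh⟩ := (conicAnisotropic_adjoinRoot_iff q a b).mp
    (ih _ hqn hq hqodd rfl) f g h (he ▸ hqe.mul_left m)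
  exact hq.not_isUnit (hcop q hqf hqg hqh)

theorem adjoin_simple {K L : Type*} [Field K] [Field L] [Algebra K L] {a b : K}
    (hab : ConicAnisotropic a b) {w : L} (hw : IsIntegral K w) (hodd : Odd (finrank K K⟮w⟯)) :
    ConicAnisotropic (algebraMap K K⟮w⟯ a) (algebraMap K K⟮w⟯ b) :=
  (hab.adjoinRoot (minpoly.irreducible hw) (adjoin.finrank hw ▸ hodd)).map_algEquiv
    (adjoinRootEquivAdjoin K hw)

-- The induction changes the base field, so it runs with base and extension in one universe.
theorem algebraMap_of_odd_finrank_aux {K L : Type u} [Field K] [Field L] [Algebra K L]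
    (hodd : Odd (finrank K L)) {a b : K} (hab : ConicAnisotropic a b) :
    ConicAnisotropic (algebraMap K L a) (algebraMap K L b) := by
  induction hn : finrank K L using Nat.strong_induction_on generalizing K with
  | _ n ih =>
  have : FiniteDimensional K L := Module.finite_of_finrank_pos hodd.pos
  by_cases hsurj : Function.Surjective (algebraMap K L)
  · exact hab.map_algEquiv
      (AlgEquiv.ofBijective (Algebra.ofId K L) ⟨(algebraMap K L).injective, hsurj⟩)
  obtain ⟨w, hw⟩ : ∃ w : L, w ∉ (⊥ : IntermediateField K L) := by
    simpa [Function.Surjective, mem_bot] using hsurj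
  have hmul : finrank K K⟮w⟯ * finrank K⟮w⟯ L = finrank K L := finrank_mul_finrank K K⟮w⟯ L
  obtain ⟨hoddE, hoddL⟩ := Nat.odd_mul.mp (hmul ▸ hodd)
  have hE : finrank K K⟮w⟯ ≠ 1 := fun h1 =>
    hw (adjoin_simple_eq_bot_iff.mp (finrank_eq_one_iff.mp h1))
  have hlt : finrank K⟮w⟯ L < n := by
    rw [← hn, ← hmul]
    exact lt_mul_left hoddL.pos (by have := hoddE.pos; omega)
  have := ih _ hlt hoddL (hab.adjoin_simple (.of_finite K w) hoddE) rfl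
  simpa only [← IsScalarTower.algebraMap_apply] using this

theorem algebraMap_of_odd_finrank {K L : Type*} [Field K] [Field L] [Algebra K L]
    (hodd : Odd (finrank K L)) {a b : K} (hab : ConicAnisotropic a b) :
    ConicAnisotropic (algebraMap K L a) (algebraMap K L b) := by
  have := algebraMap_of_odd_finrank_aux (by rwa [finrank_bot'])
    (hab.map_algEquiv (botEquiv K L).symm)
  simpa only [← IsScalarTower.algebraMap_apply] using this

end ConicAnisotropic

theorem stmt_16_general (F F' : Type*) [Field F] [Field F'] [Algebra F F']
    (hodd : Odd (Module.finrank F F'))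
    (a b : F)
    (hdiv : ∀ q : ℍ[F, a, b], q ≠ 0 → IsUnit q) :
    (∀ q : ℍ[F', algebraMap F F' a, algebraMap F F' b], q ≠ 0 → IsUnit q) ∧
    (∀ x y z : F', x ^ 2 - algebraMap F F' a * y ^ 2 - algebraMap F F' b * z ^ 2 = 0 →
      x = 0 ∧ y = 0 ∧ z = 0) := by
  have hF' := (conicAnisotropic_of_forall_isUnit hdiv).algebraMap_of_odd_finrank hodd
  exact ⟨fun _ => hF'.isUnit_of_ne_zero, hF'⟩

/-- Springer's theorem for quaternion algebras: if `F ⊆ F'` is a field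
extension of odd degree and `Q = (a,b)_F` is a quaternion division algebra
over `F` (char `F ≠ 2`), then `Q ⊗_F F' = (a,b)_{F'}` is still a division
algebra.  In particular a smooth conic over `F` without `F`-points has no
points over any odd-degree extension: the conic `x² - a·y² - b·z² = 0` has no
nonzero `F'`-solution. -/
theorem stmt_16 (F F' : Type*) [Field F] [Field F'] [Algebra F F']
    (hodd : Odd (Module.finrank F F')) (hchar : (2 : F) ≠ 0)
    (a b : F) (ha : a ≠ 0) (hb : b ≠ 0)
    (hdiv : ∀ q : ℍ[F, a, b], q ≠ 0 → IsUnit q) :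
    (∀ q : ℍ[F', algebraMap F F' a, algebraMap F F' b], q ≠ 0 → IsUnit q) ∧
    (∀ x y z : F', x ^ 2 - algebraMap F F' a * y ^ 2 - algebraMap F F' b * z ^ 2 = 0 →
      x = 0 ∧ y = 0 ∧ z = 0) :=
  stmt_16_general F F' hodd a b hdiv
end
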